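/- The total number of histories of a finite tree t on n vertices (orderings of the vertices such that every prefix induces a connected subgraph, with arbitrary starting vertex) equals the sum over all vertices u of (n-1)! divided by the product over v ≠ u of n_v^{(u)}. -/

import Mathlib

open scoped Classical
open SimpleGraph Finset

variable {V : Type*}

/-- A history of a graph `G`: an ordering of all vertices (no repeats) such that
every nonempty prefix induces a connected subgraph. -/
def IsHistory (G : SimpleGraph V) (l : List V) : Prop :=
  l.Nodup ∧ (∀ v : V, v ∈ l) ∧ ∀ k : ℕ, 1 ≤ k → (G.induce {v | v ∈ l.take k}).Connected

/-- Number of histories of `G` rooted at (i.e. starting with) `u`. -/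
noncomputable def nHist (G : SimpleGraph V) (u : V) : ℕ :=
  Nat.card {l : List V // IsHistory G l ∧ l.head? = some u}

/-- Total number of histories of `G`. -/
noncomputable def nHistAll (G : SimpleGraph V) : ℕ :=
  Nat.card {l : List V // IsHistory G l}

/-- Size of the subtree of `G` rooted at `v` away from `u`: the number of vertices `w`
such that every walk from `w` to `u` passes through `v`. -/
noncomputable def subtreeSize (G : SimpleGraph V) (u v : V) : ℕ :=
  Nat.card {w : V | ∀ p : G.Walk w u, v ∈ p.support}

/-!
Root the tree at `u` and let `v ≤ w` when `v` lies on the path from `w` to `u`; the hook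
`{x | v ≤ x}` of `v ≠ u` is then the subtree counted by `n_v^{(u)}`, and the hook of `u` is
everything. A vertex set containing `u` induces a connected subgraph iff it is down-closed, so the
histories starting at `u` are exactly the linear extensions of this order. Every `Set.Iic x` is a
chain, so the hook length formula for forests applies: a finite `S` has
`|S|! / ∏_{v ∈ S} #{x ∈ S | v ≤ x}` linear extensions. It follows by induction on `S`: a linear
extension starts with a minimal element `m`, removing `m` leaves the other hooks unchanged, and the
hooks of the minimal elements partition `S`.
-/

namespace Finset

variable {α : Type*} [PartialOrder α]

/-- Linear extensions of the order on `S`, encoded as lists: no element may be preceded by a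
strict upper bound of it. -/
noncomputable def linearExtensions (S : Finset α) : Finset (List α) :=
  {l ∈ S.toList.permutations.toFinset | l.Pairwise fun a b => ¬ b < a}

theorem mem_linearExtensions {S : Finset α} {l : List α} :
    l ∈ S.linearExtensions ↔ l.Nodup ∧ l.toFinset = S ∧ l.Pairwise fun a b => ¬ b < a := by
  rw [linearExtensions, mem_filter, List.mem_toFinset, List.mem_permutations, ← and_assoc]
  refine and_congr_left fun _ => ⟨fun hp => ⟨hp.nodup_iff.2 S.nodup_toList, ?_⟩, fun ⟨hl, hS⟩ => ?_⟩
  · rw [List.toFinset_eq_of_perm _ _ hp, toList_toFinset]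
  · exact List.perm_of_nodup_nodup_toFinset_eq hl S.nodup_toList (by rw [hS, toList_toFinset])

theorem linearExtensions_empty : (∅ : Finset α).linearExtensions = {[]} := by
  ext l
  simp only [mem_linearExtensions, List.toFinset_eq_empty_iff, mem_singleton]
  exact ⟨fun h => h.2.1, by rintro rfl; simp⟩

theorem cons_mem_linearExtensions {S : Finset α} {m : α} {l : List α} :
    m :: l ∈ S.linearExtensions ↔ Minimal (· ∈ S) m ∧ l ∈ (S.erase m).linearExtensions := by
  simp only [mem_linearExtensions, List.nodup_cons, List.toFinset_cons, List.pairwise_cons,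
    minimal_iff_forall_lt]
  constructor
  · rintro ⟨⟨hml, hl⟩, hS, hlt, hpw⟩
    have hm : m ∉ l.toFinset := by simpa using hml
    subst hS
    refine ⟨⟨mem_insert_self _ _, fun y hy hyS => ?_⟩, hl, (erase_insert hm).symm, hpw⟩
    rcases mem_insert.1 hyS with rfl | hyl
    · exact hy.false
    · exact hlt y (List.mem_toFinset.1 hyl) hy
  · rintro ⟨⟨hmS, hmin⟩, hl, hS, hpw⟩
    have hml : m ∉ l := fun h => by simpa [hS] using List.mem_toFinset.2 h
    refine ⟨⟨hml, hl⟩, by rw [hS, insert_erase hmS], fun b hb hbm => ?_, hpw⟩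
    exact hmin hbm (mem_of_mem_erase (hS ▸ List.mem_toFinset.2 hb))

theorem card_linearExtensions {S : Finset α} (hS : S.Nonempty) :
    #S.linearExtensions = ∑ m ∈ S with Minimal (· ∈ S) m, #(S.erase m).linearExtensions := by
  have hcons : S.linearExtensions = {m ∈ S | Minimal (· ∈ S) m}.biUnion
      fun m => (S.erase m).linearExtensions.image (List.cons m) := by
    ext l
    simp only [mem_biUnion, mem_image, mem_filter]
    constructor
    · intro hl
      rcases l with _ | ⟨m, t⟩
      · simp [mem_linearExtensions, hS.ne_empty.symm] at hl
      obtain ⟨hm, ht⟩ := cons_mem_linearExtensions.1 hl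
      exact ⟨m, ⟨hm.prop, hm⟩, t, ht, rfl⟩
    · rintro ⟨m, ⟨-, hm⟩, t, ht, rfl⟩
      exact cons_mem_linearExtensions.2 ⟨hm, ht⟩
  rw [hcons, card_biUnion]
  · exact sum_congr rfl fun m _ => card_image_of_injective _ (List.cons_injective)
  · intro m₁ _ m₂ _ hne
    simp only [Function.onFun, disjoint_left, mem_image]
    rintro _ ⟨t₁, -, rfl⟩ ⟨t₂, -, h⟩
    exact hne (List.cons_eq_cons.1 h).1.symm

/-- In a forest order every element of `S` lies above exactly one minimal element of `S`. -/
theorem sum_card_le_of_minimal (hchain : ∀ x : α, IsChain (· ≤ ·) (Set.Iic x)) (S : Finset α) :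
    ∑ m ∈ S with Minimal (· ∈ S) m, #{x ∈ S | m ≤ x} = #S := by
  rw [← card_biUnion]
  · congr 1
    ext x
    simp only [mem_biUnion, mem_filter]
    refine ⟨fun ⟨_, _, hx, _⟩ => hx, fun hx => ?_⟩
    obtain ⟨m, hmx, hm⟩ := S.exists_le_minimal hx
    exact ⟨m, ⟨hm.prop, hm⟩, hx, hmx⟩
  · intro m₁ h₁ m₂ h₂ hne
    simp only [Function.onFun, disjoint_left, mem_filter]
    rintro x ⟨-, hx₁⟩ ⟨-, hx₂⟩
    have h₁ := (mem_filter.1 h₁).2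
    have h₂ := (mem_filter.1 h₂).2
    rcases hchain x hx₁ hx₂ hne with h | h
    · exact hne (h₂.eq_of_le h₁.prop h)
    · exact hne (h₁.eq_of_le h₂.prop h).symm

theorem filter_erase_le_of_minimal {S : Finset α} {m v : α} (hm : Minimal (· ∈ S) m)
    (hv : v ∈ S.erase m) : {x ∈ S.erase m | v ≤ x} = {x ∈ S | v ≤ x} := by
  ext x
  simp only [mem_filter, mem_erase]
  refine ⟨fun ⟨⟨_, hx⟩, hvx⟩ => ⟨hx, hvx⟩, fun ⟨hx, hvx⟩ => ⟨⟨?_, hx⟩, hvx⟩⟩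
  rintro rfl
  exact (ne_of_mem_erase hv) (hm.eq_of_le (mem_of_mem_erase hv) hvx)

theorem card_linearExtensions_mul_prod (hchain : ∀ x : α, IsChain (· ≤ ·) (Set.Iic x))
    (S : Finset α) : #S.linearExtensions * ∏ v ∈ S, #{x ∈ S | v ≤ x} = (#S).factorial := by
  induction S using strongInduction with
  | H S ih =>
  rcases S.eq_empty_or_nonempty with rfl | hS
  · simp [linearExtensions_empty]
  have hstep : ∀ m ∈ {m ∈ S | Minimal (· ∈ S) m}, #(S.erase m).linearExtensions *
      ∏ v ∈ S, #{x ∈ S | v ≤ x} = #{x ∈ S | m ≤ x} * (#S - 1).factorial := by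
    intro m hm
    obtain ⟨hmS, hm⟩ := mem_filter.1 hm
    have hhooks :
        ∏ v ∈ S.erase m, #{x ∈ S.erase m | v ≤ x} = ∏ v ∈ S.erase m, #{x ∈ S | v ≤ x} :=
      prod_congr rfl fun v hv => by rw [filter_erase_le_of_minimal hm hv]
    rw [← mul_prod_erase S (fun v => #{x ∈ S | v ≤ x}) hmS, mul_left_comm, ← hhooks,
      ih _ (erase_ssubset hmS), card_erase_of_mem hmS]
  rw [card_linearExtensions hS, sum_mul, sum_congr rfl hstep, ← sum_mul,
    sum_card_le_of_minimal hchain, Nat.mul_factorial_pred hS.card_pos.ne']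

end Finset

theorem List.pairwise_not_lt_iff_isLowerSet_take {α : Type*} [PartialOrder α] {l : List α}
    (hl : l.Nodup) (hlower : IsLowerSet {x | x ∈ l}) :
    l.Pairwise (fun a b => ¬ b < a) ↔ ∀ k, IsLowerSet {x | x ∈ l.take k} := by
  constructor
  · intro hpw k a b hba ha
    have hb : b ∈ l.take k ++ l.drop k :=
      (l.take_append_drop k).symm ▸ hlower hba (l.take_subset k ha)
    rw [← l.take_append_drop k, pairwise_append] at hpw
    rcases mem_append.1 hb with hb | hb
    · exact hb
    · obtain rfl := hba.eq_of_not_lt (hpw.2.2 a ha b hb)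
      exact ha
  · intro hlow
    rw [pairwise_iff_getElem]
    intro i j _ _ hij hlt
    obtain ⟨m, hm, hml⟩ := mem_take_iff_getElem.1 <|
      hlow (i + 1) hlt.le (mem_take_iff_getElem.2 ⟨i, by omega, rfl⟩)
    have hmj : m = j := hl.getElem_inj_iff.1 hml
    omega

theorem IsHistory.ne_nil {G : SimpleGraph V} {l : List V} (h : IsHistory G l) : l ≠ [] := by
  rintro rfl
  obtain ⟨⟨x, hx⟩⟩ := (h.2.2 1 le_rfl).nonempty
  simp at hx

theorem nHistAll_eq_sum_nHist [Fintype V] (G : SimpleGraph V) : nHistAll G = ∑ u, nHist G u := by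
  have : Finite {l // IsHistory G l} :=
    Finite.of_injective (fun l => (⟨l.1, l.2.1⟩ : {l : List V // l.Nodup}))
      fun _ _ h => by simpa [Subtype.ext_iff] using h
  have : IsEmpty {l : {l // IsHistory G l} // l.1.head? = none} :=
    ⟨fun ⟨⟨_, hl⟩, h⟩ => hl.ne_nil (List.head?_eq_none_iff.1 h)⟩
  rw [nHistAll, ← Nat.card_congr (Equiv.sigmaFiberEquiv fun l : {l // IsHistory G l} => l.1.head?),
    Nat.card_sigma, Fintype.sum_option, Nat.card_of_isEmpty, zero_add]
  exact sum_congr rfl fun u _ =>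
    Nat.card_congr (Equiv.subtypeSubtypeEquivSubtypeInter (IsHistory G) (·.head? = some u))

theorem subtreeSize_pos [Finite V] (G : SimpleGraph V) (u v : V) : 0 < subtreeSize G u v :=
  have : Nonempty {w | ∀ p : G.Walk w u, v ∈ p.support} := ⟨v, fun p => p.start_mem_support⟩
  Nat.card_pos

namespace SimpleGraph.IsTree

variable {G : SimpleGraph V} (hG : G.IsTree)
include hG

theorem forall_mem_support_iff {u v w : V} {p : G.Walk w u} (hp : p.IsPath) :
    (∀ q : G.Walk w u, v ∈ q.support) ↔ v ∈ p.support := by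
  refine ⟨fun h => h p, fun hv q => q.support_bypass_subset_support ?_⟩
  rwa [(hG.existsUnique_path w u).unique q.bypass_isPath hp]

/-- `v ≤ w` iff `w` lies in the subtree of `v` when the tree is rooted at `u`. -/
abbrev rootedOrder (u : V) : PartialOrder V where
  le v w := ∀ p : G.Walk w u, v ∈ p.support
  le_refl _ p := p.start_mem_support
  le_trans _ _ _ hab hbc p := p.support_dropUntil_subset_support (hbc p) (hab _)
  le_antisymm v w hvw hwv := by
    by_contra hne
    obtain ⟨p, hp⟩ := hG.connected.preconnected.exists_isPath w u
    let q := p.dropUntil v (hvw p)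
    have hqp : q.dropUntil w (hwv q) = p :=
      (hG.existsUnique_path w u).unique ((hp.dropUntil _).dropUntil _) hp
    have hlt : q.length < p.length := Walk.length_dropUntil_lt_length (hvw p) hne
    have hle := q.length_dropUntil_le_length (hwv q)
    rw [hqp] at hle
    omega

theorem rootedOrder_root_le (u w : V) : letI := hG.rootedOrder u; u ≤ w :=
  fun p => p.end_mem_support

theorem rootedOrder_isChain_Iic (u x : V) :
    letI := hG.rootedOrder u; IsChain (· ≤ ·) (Set.Iic x) := by
  intro a ha b hb _
  obtain ⟨p, hp⟩ := hG.connected.preconnected.exists_isPath x u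
  have hpa : a ∈ p.support := ha p
  have hpb : b ∈ p.support := hb p
  rcases List.suffix_or_suffix_of_suffix (p.support_dropUntil_suffix_support hpa)
    (p.support_dropUntil_suffix_support hpb) with h | h
  · exact .inl <| (hG.forall_mem_support_iff (hp.dropUntil hpb)).2
      (h.subset (Walk.start_mem_support _))
  · exact .inr <| (hG.forall_mem_support_iff (hp.dropUntil hpa)).2
      (h.subset (Walk.start_mem_support _))

theorem induce_connected_iff_isLowerSet {u : V} {s : Set V} (hu : u ∈ s) :
    letI := hG.rootedOrder u; (G.induce s).Connected ↔ IsLowerSet s := by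
  constructor
  · intro hs a b hba ha
    obtain ⟨p⟩ := hs.preconnected ⟨a, ha⟩ ⟨u, hu⟩
    obtain ⟨y, -, rfl⟩ := List.mem_map.1 <|
      (Walk.support_map _ p) ▸ hba (p.map (Embedding.induce s).toHom)
    exact y.2
  · intro hs
    refine G.induce_connected_of_patches u hu fun {v} hv => ?_
    obtain ⟨p, hp⟩ := hG.connected.preconnected.exists_isPath v u
    refine ⟨{x | x ∈ p.support}, fun x hx => hs ((hG.forall_mem_support_iff hp).2 hx) hv,
      p.end_mem_support, p.start_mem_support, p.connected_induce_support.preconnected _ _⟩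

variable [Fintype V]

theorem isHistory_and_head_iff {u : V} (l : List V) :
    letI := hG.rootedOrder u
    IsHistory G l ∧ l.head? = some u ↔ l ∈ (univ : Finset V).linearExtensions := by
  let _ := hG.rootedOrder u
  simp only [mem_linearExtensions, IsHistory, eq_univ_iff_forall, List.mem_toFinset, and_assoc]
  refine and_congr_right fun hl => and_congr_right fun hmem => ?_
  rw [List.pairwise_not_lt_iff_isLowerSet_take hl fun _ _ _ _ => hmem _]
  obtain ⟨h, t, rfl⟩ := List.exists_cons_of_ne_nil (List.ne_nil_of_mem (hmem u))
  have hu_take : ∀ k, 1 ≤ k → h ∈ {x | x ∈ (h :: t).take k} := by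
    rintro (_ | k) hk
    · omega
    · simp
  constructor
  · rintro ⟨hconn, hhead⟩ (_ | k)
    · simpa using isLowerSet_empty
    · obtain rfl : h = u := by simpa using hhead
      exact (hG.induce_connected_iff_isLowerSet (hu_take _ k.succ_pos)).1 (hconn _ k.succ_pos)
  · intro hlow
    obtain rfl : u = h := by simpa using hlow 1 (hG.rootedOrder_root_le u h) (by simp)
    exact ⟨fun k hk => (hG.induce_connected_iff_isLowerSet (hu_take k hk)).2 (hlow k), rfl⟩

theorem nHist_eq_card_linearExtensions (u : V) :
    letI := hG.rootedOrder u; nHist G u = #(univ : Finset V).linearExtensions := by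
  rw [nHist, ← Nat.card_eq_finsetCard]
  exact Nat.card_congr (Equiv.subtypeEquivRight hG.isHistory_and_head_iff)

theorem subtreeSize_eq_card (u v : V) :
    letI := hG.rootedOrder u; subtreeSize G u v = #{w | v ≤ w} := by
  rw [subtreeSize, Nat.card_eq_card_toFinset, Set.toFinset_ofPred]
  rfl

theorem nHist_mul_prod_subtreeSize [DecidableEq V] (u : V) :
    nHist G u * ∏ v ∈ univ.erase u, subtreeSize G u v = (Fintype.card V - 1).factorial := by
  let _ := hG.rootedOrder u
  have : Nonempty V := ⟨u⟩
  have hhook := card_linearExtensions_mul_prod (hG.rootedOrder_isChain_Iic u) univ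
  have hroot : #{x | u ≤ x} = Fintype.card V := by
    rw [filter_true_of_mem fun x _ => hG.rootedOrder_root_le u x, card_univ]
  rw [← mul_prod_erase univ _ (mem_univ u), hroot, card_univ, mul_left_comm,
    ← Nat.mul_factorial_pred Fintype.card_ne_zero] at hhook
  rw [hG.nHist_eq_card_linearExtensions, prod_congr rfl fun v _ => hG.subtreeSize_eq_card u v]
  exact Nat.eq_of_mul_eq_mul_left Fintype.card_pos hhook

end SimpleGraph.IsTree

theorem stmt2 [Fintype V] [DecidableEq V] (G : SimpleGraph V) (hG : G.IsTree) :
    nHistAll G =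
      ∑ u : V, Nat.factorial (Fintype.card V - 1) /
        ∏ v ∈ Finset.univ.erase u, subtreeSize G u v := by
  rw [nHistAll_eq_sum_nHist]
  refine sum_congr rfl fun u _ => ?_
  rw [← hG.nHist_mul_prod_subtreeSize u,
    Nat.mul_div_cancel _ (prod_pos fun v _ => subtreeSize_pos G u v)]
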